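/- Let Ω, K, b, M, E̲ and the faces M_f be as in the setting of a coherent assessment with K nonempty, and let P̲ and P̲' be two extensions of (K, b). Then for every gamble h, |P̲(h) − P̲'(h)| ≤ min_{f ∈ K} max_{F ∈ ext(M_f)} ⟨F, h⟩ − E̲(h). -/

import Mathlib

open scoped BigOperators

/-- Inner product of gambles: `⟨f,g⟩ = ∑ x, f x * g x`. -/
noncomputable def ip {Ω : Type*} [Fintype Ω] (f g : Ω → ℝ) : ℝ := ∑ x, f x * g x

/-- A probability mass vector on `Ω`. -/
def IsPMV {Ω : Type*} [Fintype Ω] (p : Ω → ℝ) : Prop :=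
  (∀ x, 0 ≤ p x) ∧ ∑ x, p x = 1

/-!
Both credal sets of the extensions lie in `M`, so `E̲ ≤ P̲, P̲'`. For `f ∈ K`, a minimizer of
`⟨·, f⟩` on the credal set of an extension attains `b f = E̲ f`, hence lies in the face `M_f`;
so `P̲(h)` is at most the maximum of `⟨·, h⟩` on `M_f`. That maximum is attained at an extreme
point of `M_f`: the maximizers form an exposed face of the compact set `M_f`, which has an extreme
point by the Krein–Milman lemma. Hence `P̲(h)` and `P̲'(h)` both lie in the interval between
`E̲(h)` and `min_{f ∈ K} max_{F ∈ ext(M_f)} ⟨F, h⟩`.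
-/

open Set

section ExtremePoints

variable {E : Type*} [AddCommGroup E] [Module ℝ E] [TopologicalSpace E] [T2Space E]
  [IsTopologicalAddGroup E] [ContinuousSMul ℝ E] [LocallyConvexSpace ℝ E] {s : Set E}

theorem IsCompact.exists_mem_extremePoints_isMaxOn (hs : IsCompact s) (hne : s.Nonempty)
    (l : StrongDual ℝ E) : ∃ x ∈ s.extremePoints ℝ, IsMaxOn l s x := by
  have hexp : IsExposed ℝ s {y ∈ s | ∀ z ∈ s, l z ≤ l y} := fun _ => ⟨l, rfl⟩
  obtain ⟨z, hzs, hz⟩ := hs.exists_isMaxOn hne l.continuous.continuousOn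
  obtain ⟨x, hx⟩ := (hexp.isCompact hs).extremePoints_nonempty ⟨z, hzs, hz⟩
  exact ⟨x, hexp.isExtreme.extremePoints_subset_extremePoints hx, hx.1.2⟩

theorem IsCompact.le_sSup_extremePoints (hs : IsCompact s) (l : StrongDual ℝ E) {p : E}
    (hp : p ∈ s) : l p ≤ sSup {r : ℝ | ∃ F ∈ s.extremePoints ℝ, r = l F} := by
  obtain ⟨x, hx, hmax⟩ := hs.exists_mem_extremePoints_isMaxOn ⟨p, hp⟩ l
  have hbdd : BddAbove {r : ℝ | ∃ F ∈ s.extremePoints ℝ, r = l F} := by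
    refine ⟨l x, ?_⟩
    rintro _ ⟨F, hF, rfl⟩
    exact hmax hF.1
  exact (hmax hp).trans (le_csSup hbdd ⟨x, hx, rfl⟩)

end ExtremePoints

section Gambles

variable {Ω : Type*} [Fintype Ω]

noncomputable def ipLeft (g : Ω → ℝ) : StrongDual ℝ (Ω → ℝ) where
  toFun p := ip p g
  map_add' p q := by simp only [ip, Pi.add_apply, add_mul, Finset.sum_add_distrib]
  map_smul' c p := by simp only [ip, Pi.smul_apply, smul_eq_mul, mul_assoc, ← Finset.mul_sum,
    RingHom.id_apply]
  cont := continuous_finsetSum _ fun x _ => (continuous_apply x).mul continuous_const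

def credalSet (K : Set (Ω → ℝ)) (b : (Ω → ℝ) → ℝ) : Set (Ω → ℝ) :=
  {p | IsPMV p ∧ ∀ g ∈ K, b g ≤ ip p g}

theorem isCompact_credalSet (K : Set (Ω → ℝ)) (b : (Ω → ℝ) → ℝ) :
    IsCompact (credalSet K b) := by
  have hcredal : credalSet K b = stdSimplex ℝ Ω ∩ ⋂ g ∈ K, {p | b g ≤ ipLeft g p} := by
    ext p
    simp only [credalSet, mem_inter_iff, mem_iInter₂, mem_ofPred_eq]
    rfl
  rw [hcredal]
  exact (isCompact_stdSimplex ℝ Ω).inter_right <|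
    isClosed_biInter fun g _ => isClosed_le continuous_const (ipLeft g).continuous

def IsLowerEnvelope (N : Set (Ω → ℝ)) (l : (Ω → ℝ) → ℝ) : Prop :=
  ∀ h, IsLeast {r | ∃ p ∈ N, r = ip p h} (l h)

namespace IsLowerEnvelope

variable {N N' : Set (Ω → ℝ)} {l l' : (Ω → ℝ) → ℝ}

theorem le_of_subset (hN : IsLowerEnvelope N l) (hN' : IsLowerEnvelope N' l') (hsub : N ⊆ N')
    (h : Ω → ℝ) : l' h ≤ l h := by
  obtain ⟨p, hp, hph⟩ := (hN h).1
  exact hph ▸ (hN' h).2 ⟨p, hsub hp, rfl⟩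

theorem subset_credalSet {K : Set (Ω → ℝ)} {b : (Ω → ℝ) → ℝ} (hN : IsLowerEnvelope N l)
    (hpmv : ∀ p ∈ N, IsPMV p) (hb : ∀ g ∈ K, l g = b g) : N ⊆ credalSet K b :=
  fun p hp => ⟨hpmv p hp, fun g hg => hb g hg ▸ (hN g).2 ⟨p, hp, rfl⟩⟩

/-- A minimizer of `⟨·, f⟩` on `N` lies in the face `{q ∈ M | ⟨q, f⟩ = l f}`. -/
theorem le_sSup_extremePoints_face {M : Set (Ω → ℝ)} (hN : IsLowerEnvelope N l) (hsub : N ⊆ M)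
    (hM : IsCompact M) (f h : Ω → ℝ) :
    l h ≤ sSup {s | ∃ F ∈ extremePoints ℝ {q ∈ M | ip q f = l f}, s = ip F h} := by
  obtain ⟨p, hpN, hpf⟩ := (hN f).1
  have hface : IsCompact {q ∈ M | ip q f = l f} :=
    hM.inter_right (isClosed_eq (ipLeft f).continuous continuous_const)
  calc l h ≤ ip p h := (hN h).2 ⟨p, hpN, rfl⟩
    _ ≤ _ := hface.le_sSup_extremePoints (ipLeft h) ⟨hsub hpN, hpf.symm⟩

theorem le_sInf_sSup_extremePoints_face {M K : Set (Ω → ℝ)} {lE : (Ω → ℝ) → ℝ}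
    (hK : K.Nonempty) (hN : IsLowerEnvelope N l) (hsub : N ⊆ M) (hM : IsCompact M)
    (hl : ∀ f ∈ K, l f = lE f) (h : Ω → ℝ) :
    l h ≤ sInf {r | ∃ f ∈ K,
      r = sSup {s | ∃ F ∈ extremePoints ℝ {q ∈ M | ip q f = lE f}, s = ip F h}} := by
  obtain ⟨f₀, hf₀⟩ := hK
  refine le_csInf ⟨_, f₀, hf₀, rfl⟩ ?_
  rintro _ ⟨f, hf, rfl⟩
  rw [← hl f hf]
  exact hN.le_sSup_extremePoints_face hsub hM f h

end IsLowerEnvelope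

end Gambles

theorem stmt15_general {Ω : Type*} [Fintype Ω]
    (K : Finset (Ω → ℝ)) (hK : K.Nonempty) (b : (Ω → ℝ) → ℝ)
    (M : Set (Ω → ℝ)) (hM : M = {p | IsPMV p ∧ ∀ g ∈ K, b g ≤ ip p g})
    (lE : (Ω → ℝ) → ℝ)
    (hlE : ∀ h : Ω → ℝ, IsLeast {r : ℝ | ∃ p ∈ M, r = ip p h} (lE h))
    (hcoh : ∀ g ∈ K, lE g = b g)
    (M₁ : Set (Ω → ℝ)) (hpmv₁ : ∀ p ∈ M₁, IsPMV p)
    (lP : (Ω → ℝ) → ℝ)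
    (hlP : ∀ h : Ω → ℝ, IsLeast {r : ℝ | ∃ p ∈ M₁, r = ip p h} (lP h))
    (hb₁ : ∀ g ∈ K, lP g = b g)
    (M₂ : Set (Ω → ℝ)) (hpmv₂ : ∀ p ∈ M₂, IsPMV p)
    (lP' : (Ω → ℝ) → ℝ)
    (hlP' : ∀ h : Ω → ℝ, IsLeast {r : ℝ | ∃ p ∈ M₂, r = ip p h} (lP' h))
    (hb₂ : ∀ g ∈ K, lP' g = b g) :
    ∀ h : Ω → ℝ,
      |lP h - lP' h| ≤ sInf {r : ℝ | ∃ f ∈ K,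
        r = sSup {s : ℝ | ∃ F ∈ Set.extremePoints ℝ {q ∈ M | ip q f = lE f},
          s = ip F h}} - lE h := by
  intro h
  have hMc : IsCompact M := hM ▸ isCompact_credalSet (K : Set (Ω → ℝ)) b
  have hsub₁ : M₁ ⊆ M := hM ▸ IsLowerEnvelope.subset_credalSet hlP hpmv₁ hb₁
  have hsub₂ : M₂ ⊆ M := hM ▸ IsLowerEnvelope.subset_credalSet hlP' hpmv₂ hb₂
  have hK' : (K : Set (Ω → ℝ)).Nonempty := hK
  exact abs_sub_le_of_le_of_le
    (IsLowerEnvelope.le_of_subset hlP hlE hsub₁ h)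
    (IsLowerEnvelope.le_sInf_sSup_extremePoints_face hK' hlP hsub₁ hMc
      (fun f hf => (hb₁ f hf).trans (hcoh f hf).symm) h)
    (IsLowerEnvelope.le_of_subset hlP' hlE hsub₂ h)
    (IsLowerEnvelope.le_sInf_sSup_extremePoints_face hK' hlP' hsub₂ hMc
      (fun f hf => (hb₂ f hf).trans (hcoh f hf).symm) h)

/-- for two extensions `P̲`, `P̲'` of a coherent assessment `(K, b)` and any
gamble `h`, `|P̲(h) − P̲'(h)| ≤ min_{f ∈ K} max_{F ∈ ext(M_f)} ⟨F, h⟩ − E̲(h)`. -/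
theorem stmt15 {Ω : Type*} [Fintype Ω] [Nonempty Ω]
    (K : Finset (Ω → ℝ)) (hK : K.Nonempty) (b : (Ω → ℝ) → ℝ)
    (M : Set (Ω → ℝ)) (hM : M = {p | IsPMV p ∧ ∀ g ∈ K, b g ≤ ip p g})
    (hMne : M.Nonempty)
    (lE : (Ω → ℝ) → ℝ)
    (hlE : ∀ h : Ω → ℝ, IsLeast {r : ℝ | ∃ p ∈ M, r = ip p h} (lE h))
    (hcoh : ∀ g ∈ K, lE g = b g)
    (M₁ : Set (Ω → ℝ)) (hne₁ : M₁.Nonempty) (hcomp₁ : IsCompact M₁)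
    (hconv₁ : Convex ℝ M₁) (hpmv₁ : ∀ p ∈ M₁, IsPMV p)
    (lP : (Ω → ℝ) → ℝ)
    (hlP : ∀ h : Ω → ℝ, IsLeast {r : ℝ | ∃ p ∈ M₁, r = ip p h} (lP h))
    (hb₁ : ∀ g ∈ K, lP g = b g)
    (M₂ : Set (Ω → ℝ)) (hne₂ : M₂.Nonempty) (hcomp₂ : IsCompact M₂)
    (hconv₂ : Convex ℝ M₂) (hpmv₂ : ∀ p ∈ M₂, IsPMV p)
    (lP' : (Ω → ℝ) → ℝ)
    (hlP' : ∀ h : Ω → ℝ, IsLeast {r : ℝ | ∃ p ∈ M₂, r = ip p h} (lP' h))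
    (hb₂ : ∀ g ∈ K, lP' g = b g) :
    ∀ h : Ω → ℝ,
      |lP h - lP' h| ≤ sInf {r : ℝ | ∃ f ∈ K,
        r = sSup {s : ℝ | ∃ F ∈ Set.extremePoints ℝ {q ∈ M | ip q f = lE f},
          s = ip F h}} - lE h :=
  stmt15_general K hK b M hM lE hlE hcoh M₁ hpmv₁ lP hlP hb₁ M₂ hpmv₂ lP' hlP' hb₂
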